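/- arXiv:math/0609752 — 3 statements merged into one kernel-verified Lean document; each statement's English description precedes it below -/
import Mathlib

section
/- The equation −y′(x) + q(x)y(x) = f(x) on ℝ is correctly solvable in C(ℝ) (bounded continuous functions with the sup norm) if and only if there exists a ∈ (0,∞) such that q₀(a) := inf_{x∈ℝ} ∫_{x−a}^{x+a} q(t) dt > 0. -/
open MeasureTheory Filter Topology
open scoped ENNReal

/-- `y` is a solution of `-y' + q y = f` on `ℝ`: it is locally absolutely
continuous and its a.e. derivative `y'` equals `q y - f`. -/
def IsSolution (q f y : ℝ → ℝ) : Prop :=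
  LocallyIntegrable (fun t => q t * y t - f t) volume ∧
  ∀ a b : ℝ, y b - y a = ∫ t in a..b, (q t * y t - f t)

/-- The equation `-y' + q y = f` is correctly solvable in `C(ℝ)`, the space of
bounded continuous functions with the supremum norm. -/
def CorrectlySolvableC (q : ℝ → ℝ) : Prop :=
  ∃ c : ℝ, 0 < c ∧ ∀ f : ℝ → ℝ, Continuous f → (∃ M : ℝ, ∀ t, |f t| ≤ M) →
    (∃! y : ℝ → ℝ, IsSolution q f y ∧ Continuous y ∧ (∃ M : ℝ, ∀ t, |y t| ≤ M)) ∧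
    ∀ y : ℝ → ℝ, IsSolution q f y → Continuous y → (∃ M : ℝ, ∀ t, |y t| ≤ M) →
      ∀ x : ℝ, |y x| ≤ c * ⨆ t : ℝ, |f t|

open Set

/-!
Necessity: for `f = 1` the bounded solution satisfies `|y| ≤ c`, and integrating the equation
over an interval of length `2a` gives `2a - 2c ≤ c ∫ q`, so `a = c + 1` works.

Sufficiency: the primitive `Q` of `q` grows at least linearly, `Q t - Q x ≥ k (t - x) - q₀(a)`
with `k = q₀(a) / (2a)`. Hence `y x = e^{Q x} ∫_x^∞ e^{-Q t} f t dt` converges, is bounded by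
`e^{q₀(a)} ‖f‖ / k` and solves the equation, while a bounded solution of the homogeneous equation
is a multiple of `e^Q`, hence zero. Since solutions are only absolutely continuous, the product
and chain rules are applied through the fundamental theorem of calculus for absolutely continuous
functions.
-/

theorem LipschitzOnWith.comp_absolutelyContinuousOnInterval {X Y : Type*}
    [PseudoMetricSpace X] [PseudoMetricSpace Y] {φ : X → Y} {f : ℝ → X} {s : Set X}
    {K : NNReal} {a b : ℝ} (hφ : LipschitzOnWith K φ s) (hfs : MapsTo f (uIcc a b) s)
    (hf : AbsolutelyContinuousOnInterval f a b) :
    AbsolutelyContinuousOnInterval (φ ∘ f) a b := by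
  rw [absolutelyContinuousOnInterval_iff] at hf ⊢
  intro ε hε
  obtain ⟨δ, hδ, hfδ⟩ := hf (ε / (K + 1)) (by positivity)
  refine ⟨δ, hδ, fun E hE hEδ => ?_⟩
  calc ∑ i ∈ Finset.range E.1, dist (φ (f (E.2 i).1)) (φ (f (E.2 i).2))
      ≤ ∑ i ∈ Finset.range E.1, K * dist (f (E.2 i).1) (f (E.2 i).2) :=
        Finset.sum_le_sum fun i hi => lipschitzOnWith_iff_dist_le_mul.1 hφ _
          (hfs (hE.1 i hi).1) _ (hfs (hE.1 i hi).2)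
    _ = K * ∑ i ∈ Finset.range E.1, dist (f (E.2 i).1) (f (E.2 i).2) := (Finset.mul_sum ..).symm
    _ ≤ K * (ε / (K + 1)) := by gcongr; exact (hfδ E hE hEδ).le
    _ < ε := by
      rw [mul_div_assoc', div_lt_iff₀ (by positivity)]; nlinarith [NNReal.coe_nonneg K]

theorem LocallyLipschitz.comp_absolutelyContinuousOnInterval {X Y : Type*}
    [SeminormedAddCommGroup X] [PseudoMetricSpace Y] {φ : X → Y} {f : ℝ → X} {a b : ℝ}
    (hφ : LocallyLipschitz φ) (hf : AbsolutelyContinuousOnInterval f a b) :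
    AbsolutelyContinuousOnInterval (φ ∘ f) a b := by
  have hc : IsCompact (f '' uIcc a b) := isCompact_uIcc.image_of_continuousOn hf.continuousOn
  have hl : LocallyLipschitzOn (f '' uIcc a b) φ := hφ.locallyLipschitzOn
  obtain ⟨K, hK⟩ := hl.exists_lipschitzOnWith_of_compact hc
  exact hK.comp_absolutelyContinuousOnInterval (mapsTo_image f _) hf

theorem Monotone.div_mul_sub_le_sub {F : ℝ → ℝ} (hF : Monotone F) {h m : ℝ} (hh : 0 < h)
    (hm : 0 ≤ m) (hinc : ∀ x, m ≤ F (x + h) - F x) {x t : ℝ} (hxt : x ≤ t) :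
    m / h * (t - x) - m ≤ F t - F x := by
  have hsteps : ∀ n : ℕ, n * m ≤ F (x + n * h) - F x := by
    intro n
    induction n with
    | zero => simp
    | succ n ih =>
      have := hinc (x + n * h)
      push_cast
      rw [show x + (n + 1) * h = x + n * h + h by ring]
      linarith
  set n := ⌊(t - x) / h⌋₊
  have hn_le : n * h ≤ t - x := (le_div_iff₀ hh).1 (Nat.floor_le (div_nonneg (by linarith) hh.le))
  have hn_gt : (t - x) / h - 1 ≤ n := by linarith [Nat.lt_floor_add_one ((t - x) / h)]
  calc m / h * (t - x) - m = ((t - x) / h - 1) * m := by ring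
    _ ≤ n * m := by gcongr
    _ ≤ F (x + n * h) - F x := hsteps n
    _ ≤ F t - F x := by gcongr; exact hF (by linarith)

theorem integrableOn_Ioi_of_abs_le_exp {h : ℝ → ℝ} {B k x : ℝ} (hk : 0 < k)
    (hh : AEStronglyMeasurable h (volume.restrict (Ioi x)))
    (hb : ∀ t > x, |h t| ≤ B * Real.exp (-(k * (t - x)))) :
    IntegrableOn h (Ioi x) := by
  refine Integrable.mono' ?_ hh ((ae_restrict_iff' measurableSet_Ioi).2 (ae_of_all _ hb))
  have := ((exp_neg_integrableOn_Ioi x hk).const_mul (B * Real.exp (k * x)))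
  refine this.congr (ae_of_all _ fun t => ?_)
  dsimp only
  rw [mul_assoc, ← Real.exp_add]; ring_nf

theorem abs_integral_Ioi_le_of_abs_le_exp {h : ℝ → ℝ} {B k x : ℝ} (hk : 0 < k)
    (hb : ∀ t > x, |h t| ≤ B * Real.exp (-(k * (t - x)))) :
    |∫ t in Ioi x, h t| ≤ B / k := by
  have hexp : ∀ t, B * Real.exp (-(k * (t - x))) = B * Real.exp (k * x) * Real.exp (-k * t) :=
    fun t => by rw [mul_assoc, ← Real.exp_add]; ring_nf
  calc |∫ t in Ioi x, h t| ≤ ∫ t in Ioi x, B * Real.exp (-(k * (t - x))) := by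
        rw [← Real.norm_eq_abs]
        refine norm_integral_le_of_norm_le ?_ ?_
        · simpa only [hexp] using (exp_neg_integrableOn_Ioi x hk).const_mul _
        · exact (ae_restrict_iff' measurableSet_Ioi).2 (ae_of_all _ hb)
    _ = B / k := by
        simp_rw [hexp]
        rw [integral_const_mul, integral_exp_mul_Ioi (by linarith), neg_div_neg_eq,
          mul_assoc, ← mul_div_assoc, ← Real.exp_add]
        simp [div_eq_mul_inv]

def IsPrimitive (F f : ℝ → ℝ) : Prop :=
  LocallyIntegrable f volume ∧ ∀ a b, F b - F a = ∫ t in a..b, f t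

namespace IsPrimitive

variable {F G f g : ℝ → ℝ}

theorem locallyIntegrable (hF : IsPrimitive F f) : LocallyIntegrable f volume := hF.1

theorem intervalIntegrable (hF : IsPrimitive F f) (a b : ℝ) :
    IntervalIntegrable f volume a b :=
  (hF.locallyIntegrable.integrableOn_isCompact isCompact_uIcc).intervalIntegrable

theorem of_locallyIntegrable (hf : LocallyIntegrable f volume) (c : ℝ) :
    IsPrimitive (fun x => ∫ t in c..x, f t) f :=
  ⟨hf, fun _ _ => intervalIntegral.integral_interval_sub_left
    (hf.integrableOn_isCompact isCompact_uIcc).intervalIntegrable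
    (hf.integrableOn_isCompact isCompact_uIcc).intervalIntegrable⟩

theorem congr (hF : IsPrimitive F f) (h : ∀ x, f x = g x) : IsPrimitive F g := by
  obtain rfl : f = g := funext h
  exact hF

theorem eq_add_integral (hF : IsPrimitive F f) (c x : ℝ) : F x = F c + ∫ t in c..x, f t := by
  rw [← hF.2 c x]; ring

theorem absolutelyContinuousOnInterval (hF : IsPrimitive F f) (a b : ℝ) :
    AbsolutelyContinuousOnInterval F a b := by
  rw [funext (hF.eq_add_integral a)]
  exact (LipschitzWith.const (F a)).lipschitzOnWith.absolutelyContinuousOnInterval.add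
    ((hF.intervalIntegrable a b).absolutelyContinuousOnInterval_intervalIntegral left_mem_uIcc)

theorem continuous (hF : IsPrimitive F f) : Continuous F := by
  rw [funext (hF.eq_add_integral 0)]
  exact continuous_const.add (intervalIntegral.continuous_primitive hF.intervalIntegrable 0)

theorem ae_hasDerivAt (hF : IsPrimitive F f) : ∀ᵐ x, HasDerivAt F (f x) x := by
  filter_upwards [LocallyIntegrable.ae_hasDerivAt_integral hF.locallyIntegrable] with x hx
  rw [funext (hF.eq_add_integral 0)]
  exact (hx 0).const_add _

theorem monotone (hF : IsPrimitive F f) (hf : ∀ x, 0 ≤ f x) : Monotone F := fun a b hab =>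
  sub_nonneg.1 <| (hF.2 a b).symm ▸ intervalIntegral.integral_nonneg hab fun x _ => hf x

theorem neg (hF : IsPrimitive F f) : IsPrimitive (fun x => -F x) (fun x => -f x) :=
  ⟨hF.locallyIntegrable.neg, fun a b => by rw [intervalIntegral.integral_neg, ← hF.2]; ring⟩

theorem sub (hF : IsPrimitive F f) (hG : IsPrimitive G g) :
    IsPrimitive (fun x => F x - G x) (fun x => f x - g x) :=
  ⟨hF.locallyIntegrable.sub hG.locallyIntegrable, fun a b => by
    rw [intervalIntegral.integral_sub (hF.intervalIntegrable a b) (hG.intervalIntegrable a b),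
      ← hF.2, ← hG.2]; ring⟩

theorem mul (hF : IsPrimitive F f) (hG : IsPrimitive G g) :
    IsPrimitive (fun x => F x * G x) (fun x => f x * G x + F x * g x) := by
  refine ⟨(hF.locallyIntegrable.mul_continuous hG.continuous).add
    (hG.locallyIntegrable.continuous_mul hF.continuous), fun a b => ?_⟩
  rw [← (hF.absolutelyContinuousOnInterval a b).integral_deriv_mul_eq_sub
    (hG.absolutelyContinuousOnInterval a b)]
  refine intervalIntegral.integral_congr_ae ?_
  filter_upwards [hF.ae_hasDerivAt, hG.ae_hasDerivAt] with x hFx hGx _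
  rw [hFx.deriv, hGx.deriv]

theorem comp (hF : IsPrimitive F f) {φ : ℝ → ℝ} (hφ : ContDiff ℝ 1 φ) :
    IsPrimitive (fun x => φ (F x)) (fun x => deriv φ (F x) * f x) := by
  refine ⟨hF.locallyIntegrable.continuous_mul ((hφ.continuous_deriv le_rfl).comp hF.continuous),
    fun a b => ?_⟩
  change (φ ∘ F) b - (φ ∘ F) a = _
  rw [← ((hφ.locallyLipschitz).comp_absolutelyContinuousOnInterval
    (hF.absolutelyContinuousOnInterval a b)).integral_deriv_eq_sub]
  refine intervalIntegral.integral_congr_ae ?_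
  filter_upwards [hF.ae_hasDerivAt] with x hFx _
  exact (((hφ.differentiable one_ne_zero) (F x)).hasDerivAt.comp x hFx).deriv

theorem integral_Ioi {h : ℝ → ℝ} (hh : ∀ x, IntegrableOn h (Ioi x)) :
    IsPrimitive (fun x => ∫ t in Ioi x, h t) (fun x => -h x) := by
  refine ⟨fun x => ⟨Ioi (x - 1), Ioi_mem_nhds (by linarith), (hh _).neg⟩, fun a b => ?_⟩
  rw [intervalIntegral.integral_neg, ← intervalIntegral.integral_Ioi_sub_Ioi' (hh a) (hh b)]
  ring

theorem exp (hF : IsPrimitive F f) :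
    IsPrimitive (fun x => Real.exp (F x)) (fun x => Real.exp (F x) * f x) := by
  simpa only [Real.deriv_exp] using hF.comp Real.contDiff_exp

theorem eq_zero_of_bounded {q Q z : ℝ → ℝ} (hz : IsPrimitive z (fun x => q x * z x))
    (hQ : IsPrimitive Q q) (hQtop : Tendsto Q atTop atTop) (hzb : ∃ M, ∀ x, |z x| ≤ M) : z = 0 := by
  obtain ⟨M, hM⟩ := hzb
  have hw : IsPrimitive (fun x => Real.exp (-Q x) * z x) 0 :=
    (hQ.neg.exp.mul hz).congr fun x => by simp only [Pi.zero_apply]; ring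
  have hz_eq : ∀ x, z x = Real.exp (Q x) * (Real.exp (-Q 0) * z 0) := fun x => by
    have := hw.2 0 x
    simp only [Pi.zero_apply, intervalIntegral.integral_zero, sub_eq_zero] at this
    rw [← this, ← mul_assoc, ← Real.exp_add]
    simp
  set c := Real.exp (-Q 0) * z 0
  have hc : c = 0 := by
    by_contra hc
    have hgrow : Tendsto (fun x => Real.exp (Q x) * |c|) atTop atTop :=
      (Real.tendsto_exp_atTop.comp hQtop).atTop_mul_const (abs_pos.2 hc)
    obtain ⟨x, hx⟩ := (hgrow.eventually_gt_atTop M).exists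
    have := hM x
    rw [hz_eq, abs_mul, abs_of_pos (Real.exp_pos _)] at this
    linarith
  funext x
  rw [hz_eq, hc, mul_zero, Pi.zero_apply]

end IsPrimitive

theorem isSolution_iff_isPrimitive {q f y : ℝ → ℝ} :
    IsSolution q f y ↔ IsPrimitive y (fun t => q t * y t - f t) := Iff.rfl

theorem IsSolution.eq_of_bounded {q Q f y₁ y₂ : ℝ → ℝ} (hQ : IsPrimitive Q q)
    (hQtop : Tendsto Q atTop atTop) (h₁ : IsSolution q f y₁) (h₂ : IsSolution q f y₂)
    (hb₁ : ∃ M, ∀ x, |y₁ x| ≤ M) (hb₂ : ∃ M, ∀ x, |y₂ x| ≤ M) : y₁ = y₂ := by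
  obtain ⟨M₁, hM₁⟩ := hb₁
  obtain ⟨M₂, hM₂⟩ := hb₂
  have hz : IsPrimitive (fun x => y₁ x - y₂ x) (fun x => q x * (y₁ x - y₂ x)) :=
    ((isSolution_iff_isPrimitive.1 h₁).sub (isSolution_iff_isPrimitive.1 h₂)).congr
      fun x => by ring
  have := hz.eq_zero_of_bounded hQ hQtop
    ⟨M₁ + M₂, fun x => (abs_sub _ _).trans (add_le_add (hM₁ x) (hM₂ x))⟩
  funext x
  exact sub_eq_zero.1 (congrFun this x)

theorem exists_isSolution_of_growth {q Q f : ℝ → ℝ} (hQ : IsPrimitive Q q) {k C : ℝ} (hk : 0 < k)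
    (hgrowth : ∀ x t, x ≤ t → k * (t - x) - C ≤ Q t - Q x)
    (hf : AEStronglyMeasurable f volume) {M : ℝ} (hM : ∀ t, |f t| ≤ M) :
    ∃ y, IsSolution q f y ∧ Continuous y ∧ ∀ x, |y x| ≤ M * Real.exp C / k := by
  set h := fun t => Real.exp (-Q t) * f t
  have hbound : ∀ x, ∀ t > x, |h t| ≤ M * Real.exp (C - Q x) * Real.exp (-(k * (t - x))) := by
    intro x t ht
    have hexp : Real.exp (-Q t) ≤ Real.exp (C - Q x) * Real.exp (-(k * (t - x))) := by
      rw [← Real.exp_add]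
      exact Real.exp_le_exp.2 (by linarith [hgrowth x t ht.le])
    calc |h t| = Real.exp (-Q t) * |f t| := by rw [abs_mul, abs_of_pos (Real.exp_pos _)]
      _ ≤ Real.exp (C - Q x) * Real.exp (-(k * (t - x))) * M := by
        gcongr
        exact hM t
      _ = _ := by ring
  have hh : AEStronglyMeasurable h volume :=
    (Real.continuous_exp.comp hQ.neg.continuous).aestronglyMeasurable.mul hf
  have hG := IsPrimitive.integral_Ioi fun x =>
    integrableOn_Ioi_of_abs_le_exp hk hh.restrict (hbound x)
  have hy := hQ.exp.mul hG
  refine ⟨_, isSolution_iff_isPrimitive.2 (hy.congr fun x => ?_), hy.continuous, fun x => ?_⟩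
  · simp only [h]
    rw [mul_neg, ← mul_assoc, ← Real.exp_add]
    simp only [add_neg_cancel, Real.exp_zero]
    ring
  · rw [abs_mul, abs_of_pos (Real.exp_pos _)]
    calc Real.exp (Q x) * |∫ t in Ioi x, h t|
        ≤ Real.exp (Q x) * (M * Real.exp (C - Q x) / k) := by
          gcongr; exact abs_integral_Ioi_le_of_abs_le_exp hk (hbound x)
      _ = M * Real.exp C / k := by
          rw [Real.exp_sub]; field_simp

theorem correctlySolvableC_of_growth {q Q : ℝ → ℝ} (hQ : IsPrimitive Q q) {k C : ℝ} (hk : 0 < k)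
    (hgrowth : ∀ x t, x ≤ t → k * (t - x) - C ≤ Q t - Q x) : CorrectlySolvableC q := by
  have hQtop : Tendsto Q atTop atTop := by
    refine tendsto_atTop_mono' _ ?_
      ((tendsto_id.const_mul_atTop hk).atTop_add (tendsto_const_nhds (x := Q 0 - C)))
    filter_upwards [eventually_ge_atTop 0] with t ht
    simp only [id]
    linarith [hgrowth 0 t ht]
  refine ⟨Real.exp C / k, by positivity, fun f hf ⟨M, hM⟩ => ?_⟩
  have hS : ∀ t, |f t| ≤ ⨆ t, |f t| := le_ciSup ⟨M, forall_mem_range.2 hM⟩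
  obtain ⟨y, hy, hyc, hyb⟩ := exists_isSolution_of_growth hQ hk hgrowth hf.aestronglyMeasurable hS
  have huniq : ∀ y', IsSolution q f y' → (∃ M, ∀ x, |y' x| ≤ M) → y' = y :=
    fun y' hy' hb => hy'.eq_of_bounded hQ hQtop hy hb ⟨_, hyb⟩
  refine ⟨⟨y, ⟨hy, hyc, _, hyb⟩, fun y' h => huniq y' h.1 h.2.2⟩, fun y' hy' _ hb x => ?_⟩
  rw [huniq y' hy' hb]
  exact (hyb x).trans_eq (by ring)

theorem correctlySolvableC_of_inf_integral_pos {q : ℝ → ℝ} (hq : ∀ x, 0 ≤ q x)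
    (hqloc : LocallyIntegrable q volume) {a : ℝ} (ha : 0 < a)
    (hpos : 0 < ⨅ x : ℝ, ∫ t in x - a..x + a, q t) : CorrectlySolvableC q := by
  set q₀ := ⨅ x : ℝ, ∫ t in x - a..x + a, q t
  have hQ := IsPrimitive.of_locallyIntegrable hqloc 0
  have hbdd : BddBelow (range fun x => ∫ t in x - a..x + a, q t) :=
    ⟨0, forall_mem_range.2 fun x => intervalIntegral.integral_nonneg (by linarith) fun t _ => hq t⟩
  have hinc : ∀ x, q₀ ≤ (∫ t in 0..x + 2 * a, q t) - ∫ t in 0..x, q t := fun x => by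
    have := ciInf_le hbdd (x + a)
    rwa [add_sub_cancel_right, add_assoc, ← two_mul, ← hQ.2] at this
  exact correctlySolvableC_of_growth hQ (by positivity) fun x t hxt =>
    (hQ.monotone hq).div_mul_sub_le_sub (by positivity) hpos.le hinc hxt

theorem IsSolution.sub_le_mul_integral {q y : ℝ → ℝ} (hq : ∀ x, 0 ≤ q x)
    (hqloc : LocallyIntegrable q volume) (hy : IsSolution q (fun _ => 1) y) {c : ℝ}
    (hyc : ∀ x, |y x| ≤ c) {a b : ℝ} (hab : a ≤ b) :
    b - a - 2 * c ≤ c * ∫ t in a..b, q t := by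
  have hqi := (hqloc.integrableOn_isCompact isCompact_uIcc).intervalIntegrable (a := a) (b := b)
  have hqyi : IntervalIntegrable (fun t => q t * y t) volume a b :=
    hqi.mul_continuousOn (isSolution_iff_isPrimitive.1 hy).continuous.continuousOn
  have hmono : ∫ t in a..b, q t * y t ≤ ∫ t in a..b, q t * c :=
    intervalIntegral.integral_mono_on hab hqyi (hqi.mul_const c)
      fun t _ => mul_le_mul_of_nonneg_left (le_of_abs_le (hyc t)) (hq t)
  have hsol := (isSolution_iff_isPrimitive.1 hy).2 a b
  rw [intervalIntegral.integral_sub hqyi intervalIntegrable_const, intervalIntegral.integral_const,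
    smul_eq_mul, mul_one] at hsol
  rw [intervalIntegral.integral_mul_const] at hmono
  linarith [(abs_le.1 (hyc a)).2, (abs_le.1 (hyc b)).1, mul_comm c (∫ t in a..b, q t)]

theorem CorrectlySolvableC.exists_inf_integral_pos {q : ℝ → ℝ} (h : CorrectlySolvableC q)
    (hq : ∀ x, 0 ≤ q x) (hqloc : LocallyIntegrable q volume) :
    ∃ a : ℝ, 0 < a ∧ 0 < ⨅ x : ℝ, ∫ t in x - a..x + a, q t := by
  obtain ⟨c, hc, hsolv⟩ := h
  obtain ⟨⟨y, ⟨hy, hyc, hyb⟩, -⟩, hbound⟩ :=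
    hsolv (fun _ => 1) continuous_const ⟨1, fun _ => by norm_num⟩
  have hyc' : ∀ x, |y x| ≤ c := fun x => by simpa using hbound y hy hyc hyb x
  refine ⟨c + 1, by linarith, lt_of_lt_of_le (by positivity : 0 < 2 / c) (le_ciInf fun x => ?_)⟩
  have := hy.sub_le_mul_integral hq hqloc hyc' (a := x - (c + 1)) (b := x + (c + 1)) (by linarith)
  rw [div_le_iff₀ hc]
  linarith

theorem stmt1 (q : ℝ → ℝ) (hq : ∀ x, 0 ≤ q x)
    (hqloc : LocallyIntegrable q volume) :
    CorrectlySolvableC q ↔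
      ∃ a : ℝ, 0 < a ∧ 0 < ⨅ x : ℝ, ∫ t in x - a..x + a, q t :=
  ⟨fun h => h.exists_inf_integral_pos hq hqloc,
    fun ⟨_, ha, hpos⟩ => correctlySolvableC_of_inf_integral_pos hq hqloc ha hpos⟩
end

section
/- Suppose there exists a ∈ (0,∞) with q₀(a) > 0. Then the equation −y′ + qy = f is separable in L_1(ℝ): for every f ∈ L_1(ℝ), the unique solution y ∈ L_1(ℝ) satisfies ∫_ℝ |y′(x)| dx + ∫_ℝ q(x)|y(x)| dx ≤ 3 ∫_ℝ |f(x)| dx. -/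
open MeasureTheory Filter Topology
open scoped ENNReal

/-!
The solution `y` is locally absolutely continuous, hence so is `|y|`, and almost everywhere
`|y|' = sign y · y' = q |y| - sign y · f ≥ q |y| - |f|`. Integrating over `[a, b]` gives
`∫_a^b q |y| ≤ |y b| - |y a| + ∫_a^b |f|`. Since `y ∈ L¹`, `|y b|` is arbitrarily small for
arbitrarily large `b`, so `∫ q |y| ≤ ∫ |f|`; finally `|y'| = |q y - f| ≤ q |y| + |f|`.
-/

theorem MeasureTheory.LocallyIntegrable.intervalIntegrable {E : Type*} [NormedAddCommGroup E]
    {g : ℝ → E} (hg : LocallyIntegrable g volume) (a b : ℝ) : IntervalIntegrable g volume a b :=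
  (hg.integrableOn_isCompact isCompact_uIcc).intervalIntegrable

theorem LipschitzWith.comp_absolutelyContinuousOnInterval {g : ℝ → ℝ} {K : NNReal}
    (hg : LipschitzWith K g) {u : ℝ → ℝ} {a b : ℝ} (hu : AbsolutelyContinuousOnInterval u a b) :
    AbsolutelyContinuousOnInterval (g ∘ u) a b := by
  unfold AbsolutelyContinuousOnInterval at hu ⊢
  have hK := hu.const_mul (K : ℝ)
  rw [mul_zero] at hK
  refine squeeze_zero (fun _ => Finset.sum_nonneg fun _ _ => dist_nonneg) (fun E => ?_) hK
  rw [Finset.mul_sum]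
  exact Finset.sum_le_sum fun i _ => hg.dist_le_mul _ _

theorem deriv_abs_comp_eq_sign_mul {u : ℝ → ℝ} {u' x : ℝ} (hu : HasDerivAt u u' x) :
    deriv (fun t => |u t|) x = SignType.sign (u x) * u' := by
  rcases eq_or_ne (u x) 0 with hx | hx
  · -- a local minimum: the derivative vanishes, either genuinely or as the junk value of `deriv`
    have hmin : IsLocalMin (fun t => |u t|) x :=
      Eventually.of_forall fun t => by simp [hx]
    simp [hmin.deriv_eq_zero, hx]
  · exact ((hasDerivAt_abs hx).comp x hu).deriv

theorem sign_mul_le_abs (u v : ℝ) : (SignType.sign u : ℝ) * v ≤ |v| := by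
  rcases lt_trichotomy u 0 with hu | rfl | hu
  · simpa [hu] using neg_le_abs v
  · simp
  · simpa [hu] using le_abs_self v

theorem MeasureTheory.Integrable.exists_ge_norm_lt {E : Type*} [NormedAddCommGroup E] {g : ℝ → E}
    (hg : Integrable g volume) {ε : ℝ} (hε : 0 < ε) (R : ℝ) : ∃ b ≥ R, ‖g b‖ < ε := by
  by_contra! h
  have : volume (Set.Ici R) < ∞ :=
    (measure_mono fun b hb => h b hb).trans_lt (hg.measure_norm_ge_lt_top hε)
  simp at this

theorem MeasureTheory.Integrable.exists_seq_tendsto_atTop_tendsto_zero {E : Type*}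
    [NormedAddCommGroup E] {g : ℝ → E} (hg : Integrable g volume) :
    ∃ b : ℕ → ℝ, Tendsto b atTop atTop ∧ Tendsto (fun n => g (b n)) atTop (𝓝 0) := by
  choose b hb using fun n : ℕ => hg.exists_ge_norm_lt (Nat.one_div_pos_of_nat (α := ℝ)) n
  refine ⟨b, tendsto_atTop_mono (fun n => (hb n).1) tendsto_natCast_atTop_atTop, ?_⟩
  exact squeeze_zero_norm (fun n => (hb n).2.le) tendsto_one_div_add_atTop_nhds_zero_nat

theorem lintegral_ofReal_abs_mul_sub_le {α : Type*} [MeasurableSpace α] {μ : Measure α}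
    {q f y : α → ℝ} (hq : ∀ x, 0 ≤ q x) (hf : AEMeasurable f μ) :
    ∫⁻ x, ENNReal.ofReal |q x * y x - f x| ∂μ ≤
      ∫⁻ x, ENNReal.ofReal (q x * |y x|) ∂μ + ∫⁻ x, ENNReal.ofReal |f x| ∂μ := by
  rw [← lintegral_add_right' _ hf.abs.ennreal_ofReal]
  refine lintegral_mono fun x => (ENNReal.ofReal_le_ofReal ?_).trans ENNReal.ofReal_add_le
  simpa [abs_mul, abs_of_nonneg (hq x)] using abs_sub (q x * y x) (f x)

namespace IsSolution

variable {q f y : ℝ → ℝ}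

theorem eq_add_integral (hy : IsSolution q f y) (c x : ℝ) :
    y x = y c + ∫ t in c..x, (q t * y t - f t) := by
  linarith [hy.2 c x]

theorem continuous (hy : IsSolution q f y) : Continuous y :=
  (continuous_const.add (intervalIntegral.continuous_primitive hy.1.intervalIntegrable 0)).congr
    fun x => (hy.eq_add_integral 0 x).symm

theorem ae_hasDerivAt (hy : IsSolution q f y) : ∀ᵐ x, HasDerivAt y (q x * y x - f x) x := by
  filter_upwards [LocallyIntegrable.ae_hasDerivAt_integral hy.1] with x hx
  exact ((hx 0).const_add (y 0)).congr_of_eventuallyEq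
    (Eventually.of_forall (hy.eq_add_integral 0))

theorem absolutelyContinuousOnInterval (hy : IsSolution q f y) (a b : ℝ) :
    AbsolutelyContinuousOnInterval y a b := by
  have hprim := (hy.1.intervalIntegrable a b).absolutelyContinuousOnInterval_intervalIntegral
    Set.left_mem_uIcc
  have hconst : AbsolutelyContinuousOnInterval (fun _ => y a) a b :=
    (LipschitzWith.const (y a)).lipschitzOnWith.absolutelyContinuousOnInterval
  rw [funext (hy.eq_add_integral a)]
  exact hconst.add hprim

theorem locallyIntegrable_mul_abs (hqloc : LocallyIntegrable q volume) (hy : IsSolution q f y) :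
    LocallyIntegrable (fun t => q t * |y t|) volume :=
  locallyIntegrable_iff.2 fun _ hk =>
    (hqloc.integrableOn_isCompact hk).mul_continuousOn hy.continuous.abs.continuousOn hk

theorem integral_mul_abs_le (hqloc : LocallyIntegrable q volume)
    (hf : LocallyIntegrable f volume) (hy : IsSolution q f y) {a b : ℝ} (hab : a ≤ b) :
    ∫ t in a..b, q t * |y t| ≤ |y b| - |y a| + ∫ t in a..b, |f t| := by
  have habs : AbsolutelyContinuousOnInterval (fun t => |y t|) a b :=
    lipschitzWith_one_norm.comp_absolutelyContinuousOnInterval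
      (hy.absolutelyContinuousOnInterval a b)
  have hqy := (hy.locallyIntegrable_mul_abs hqloc).intervalIntegrable a b
  have hfa : IntervalIntegrable (fun t => |f t|) volume a b := (hf.intervalIntegrable a b).abs
  have hderiv : ∀ᵐ t, q t * |y t| - |f t| ≤ deriv (fun t => |y t|) t := by
    filter_upwards [hy.ae_hasDerivAt] with t ht
    rw [deriv_abs_comp_eq_sign_mul ht, ← sign_mul_self (y t)]
    linear_combination sign_mul_le_abs (y t) (f t)
  have := intervalIntegral.integral_mono_ae hab (hqy.sub hfa) habs.intervalIntegrable_deriv hderiv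
  rw [intervalIntegral.integral_sub hqy hfa, habs.integral_deriv_eq_sub] at this
  linarith

theorem setLIntegral_Ioc_mul_abs_le (hq : ∀ x, 0 ≤ q x) (hqloc : LocallyIntegrable q volume)
    (hf : LocallyIntegrable f volume) (hy : IsSolution q f y) {a b : ℝ} (hab : a ≤ b) :
    ∫⁻ x in Set.Ioc a b, ENNReal.ofReal (q x * |y x|) ≤
      ENNReal.ofReal |y b| + ∫⁻ x, ENNReal.ofReal |f x| := by
  have hqy := ((hy.locallyIntegrable_mul_abs hqloc).intervalIntegrable a b).1
  have hfa := ((hf.intervalIntegrable a b).1).abs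
  calc ∫⁻ x in Set.Ioc a b, ENNReal.ofReal (q x * |y x|)
      = ENNReal.ofReal (∫ t in a..b, q t * |y t|) := by
        rw [intervalIntegral.integral_of_le hab, ofReal_integral_eq_lintegral_ofReal hqy
          (ae_of_all _ fun x => mul_nonneg (hq x) (abs_nonneg _))]
    _ ≤ ENNReal.ofReal (|y b| + ∫ t in a..b, |f t|) := by
        gcongr
        linarith [hy.integral_mul_abs_le hqloc hf hab, abs_nonneg (y a)]
    _ ≤ ENNReal.ofReal |y b| + ∫⁻ x in Set.Ioc a b, ENNReal.ofReal |f x| := by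
        refine ENNReal.ofReal_add_le.trans (le_of_eq ?_)
        rw [intervalIntegral.integral_of_le hab, ofReal_integral_eq_lintegral_ofReal hfa
          (ae_of_all _ fun x => abs_nonneg _)]
    _ ≤ ENNReal.ofReal |y b| + ∫⁻ x, ENNReal.ofReal |f x| :=
        add_le_add_right (setLIntegral_le_lintegral _ _) _

theorem lintegral_mul_abs_le (hq : ∀ x, 0 ≤ q x) (hqloc : LocallyIntegrable q volume)
    (hf : LocallyIntegrable f volume) (hy : IsSolution q f y) (hyL1 : Integrable y volume) :
    ∫⁻ x, ENNReal.ofReal (q x * |y x|) ≤ ∫⁻ x, ENNReal.ofReal |f x| := by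
  obtain ⟨b, hb, hyb⟩ := hyL1.exists_seq_tendsto_atTop_tendsto_zero
  have hmeas : AEMeasurable (fun x => ENNReal.ofReal (q x * |y x|)) volume :=
    (hy.locallyIntegrable_mul_abs hqloc).aestronglyMeasurable.aemeasurable.ennreal_ofReal
  have hcover : AECover volume atTop fun n : ℕ => Set.Ioc (-(n : ℝ)) (b n) :=
    aecover_Ioc (tendsto_neg_atTop_atBot.comp tendsto_natCast_atTop_atTop) hb
  have hbound : Tendsto (fun n => ENNReal.ofReal |y (b n)| + ∫⁻ x, ENNReal.ofReal |f x|) atTop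
      (𝓝 (∫⁻ x, ENNReal.ofReal |f x|)) := by
    simpa using ((ENNReal.continuous_ofReal.tendsto 0).comp (by simpa using hyb.abs)).add_const _
  refine le_of_tendsto_of_tendsto' (hcover.lintegral_tendsto_of_nat hmeas) hbound fun n => ?_
  rcases le_total (-(n : ℝ)) (b n) with hn | hn
  · exact setLIntegral_Ioc_mul_abs_le hq hqloc hf hy hn
  · simp [Set.Ioc_eq_empty_of_le hn]

end IsSolution

theorem stmt4_general (q : ℝ → ℝ) (hq : ∀ x, 0 ≤ q x)
    (hqloc : LocallyIntegrable q volume)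
    (f y : ℝ → ℝ) (hf : Integrable f volume)
    (hy : IsSolution q f y) (hyL1 : Integrable y volume) :
    (∫⁻ x : ℝ, ENNReal.ofReal |q x * y x - f x|) +
      (∫⁻ x : ℝ, ENNReal.ofReal (q x * |y x|)) ≤
      3 * ∫⁻ x : ℝ, ENNReal.ofReal |f x| := by
  set F := ∫⁻ x, ENNReal.ofReal |f x|
  set K := ∫⁻ x, ENNReal.ofReal (q x * |y x|)
  have hK : K ≤ F := hy.lintegral_mul_abs_le hq hqloc hf.locallyIntegrable hyL1
  calc (∫⁻ x, ENNReal.ofReal |q x * y x - f x|) + K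
      ≤ (K + F) + K := by grw [lintegral_ofReal_abs_mul_sub_le hq hf.aemeasurable]
    _ ≤ (F + F) + F := by grw [hK]
    _ = 3 * F := by ring

theorem stmt4 (q : ℝ → ℝ) (hq : ∀ x, 0 ≤ q x)
    (hqloc : LocallyIntegrable q volume)
    (a : ℝ) (ha : 0 < a) (hqa : 0 < ⨅ x : ℝ, ∫ t in x - a..x + a, q t)
    (f y : ℝ → ℝ) (hf : Integrable f volume)
    (hy : IsSolution q f y) (hyL1 : Integrable y volume) :
    (∫⁻ x : ℝ, ENNReal.ofReal |q x * y x - f x|) +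
      (∫⁻ x : ℝ, ENNReal.ofReal (q x * |y x|)) ≤
      3 * ∫⁻ x : ℝ, ENNReal.ofReal |f x| :=
  stmt4_general q hq hqloc f y hf hy hyL1
end

section
/- Suppose there exists a ∈ (0,∞) with q₀(a) > 0. Then for every x ∈ ℝ, J(x) := ∫_x^∞ exp(−∫_x^t q(ξ) dξ) dt ≤ 2a + 2a(1 − e^{−q₀(a)})^{−1}; in particular J₀ := sup_{x∈ℝ} J(x) < ∞. -/
open MeasureTheory Filter Topology
open scoped ENNReal

theorem stmt8 (q : ℝ → ℝ) (hq : ∀ x, 0 ≤ q x)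
    (hqloc : LocallyIntegrable q volume)
    (a : ℝ) (ha : 0 < a) (hqa : 0 < ⨅ z : ℝ, ∫ t in z - a..z + a, q t) :
    (∀ x : ℝ,
      (∫⁻ t in Set.Ioi x, ENNReal.ofReal (Real.exp (-∫ ξ in x..t, q ξ))) ≤
        ENNReal.ofReal
          (2 * a + 2 * a *
            (1 - Real.exp (-(⨅ z : ℝ, ∫ t in z - a..z + a, q t)))⁻¹)) ∧
    (⨆ x : ℝ, ∫⁻ t in Set.Ioi x, ENNReal.ofReal (Real.exp (-∫ ξ in x..t, q ξ))) < ⊤ := by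
  set c := ⨅ z : ℝ, ∫ t in z - a..z + a, q t with hcdef
  have hii : ∀ u v : ℝ, IntervalIntegrable q volume u v := fun u v =>
    (hqloc.integrableOn_isCompact isCompact_uIcc).intervalIntegrable
  have hcle : ∀ z : ℝ, c ≤ ∫ t in z - a..z + a, q t := by
    intro z
    refine ciInf_le ⟨0, ?_⟩ z
    rintro r ⟨w, rfl⟩
    exact intervalIntegral.integral_nonneg (by linarith) (fun t _ => hq t)
  have hmono : ∀ u v w : ℝ, u ≤ v → v ≤ w →
      (∫ ξ in u..v, q ξ) ≤ ∫ ξ in u..w, q ξ := by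
    intro u v w huv hvw
    have hadd := intervalIntegral.integral_add_adjacent_intervals (hii u v) (hii v w)
    have h2 : 0 ≤ ∫ ξ in v..w, q ξ := intervalIntegral.integral_nonneg hvw fun t _ => hq t
    linarith
  have hstep : ∀ (z : ℝ) (k : ℕ), (k : ℝ) * c ≤ ∫ ξ in z..(z + 2*a*k), q ξ := by
    intro z k
    induction k with
    | zero => simp
    | succ n ih =>
      have hadd := intervalIntegral.integral_add_adjacent_intervals
        (hii z (z + 2*a*n)) (hii (z + 2*a*n) (z + 2*a*(n+1 : ℕ)))
      have hlast : c ≤ ∫ ξ in (z + 2*a*n)..(z + 2*a*(n+1 : ℕ)), q ξ := by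
        have h := hcle (z + 2*a*n + a)
        have e1 : z + 2*a*n + a - a = z + 2*a*n := by ring
        have e2 : z + 2*a*n + a + a = z + 2*a*(n+1 : ℕ) := by push_cast; ring
        rw [e1, e2] at h
        exact h
      have : ((n : ℝ) + 1) * c ≤ ∫ ξ in z..(z + 2*a*(n+1 : ℕ)), q ξ := by linarith
      simpa using this
  -- bound on each piece
  have hexp : ∀ (x : ℝ) (k : ℕ), ∀ t ∈ Set.Ioc (x + 2*a*k) (x + 2*a*(k+1 : ℕ)),
      Real.exp (-∫ ξ in x..t, q ξ) ≤ Real.exp (-c) ^ k := by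
    intro x k t ht
    have h1 : x ≤ x + 2*a*k := by nlinarith [(Nat.cast_nonneg k : (0:ℝ) ≤ k)]
    have h2 : x + 2*a*k ≤ t := le_of_lt ht.1
    have h3 : (k : ℝ) * c ≤ ∫ ξ in x..t, q ξ :=
      le_trans (hstep x k) (hmono x (x + 2*a*k) t h1 h2)
    calc Real.exp (-∫ ξ in x..t, q ξ) ≤ Real.exp (-((k : ℝ) * c)) :=
          Real.exp_le_exp.mpr (by linarith)
      _ = Real.exp (-c) ^ k := by
          rw [← Real.exp_nat_mul]; ring_nf
  -- covering
  have hcover : ∀ x : ℝ, Set.Ioi x ⊆ ⋃ k : ℕ, Set.Ioc (x + 2*a*k) (x + 2*a*(k+1 : ℕ)) := by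
    intro x t ht
    have ht' : x < t := ht
    have hP : ∃ n : ℕ, t ≤ x + 2*a*(n+1 : ℕ) := by
      obtain ⟨n, hn⟩ := exists_nat_ge ((t - x) / (2*a))
      refine ⟨n, ?_⟩
      have h2a : (0:ℝ) < 2*a := by linarith
      have : t - x ≤ 2*a*n := by
        rw [div_le_iff₀ h2a] at hn; linarith
      push_cast
      nlinarith
    classical
    obtain ⟨n, hle, hmin⟩ : ∃ n : ℕ, (t ≤ x + 2*a*(n+1 : ℕ)) ∧
        ∀ m : ℕ, m < n → ¬ t ≤ x + 2*a*(m+1 : ℕ) :=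
      ⟨Nat.find hP, Nat.find_spec hP, fun m hm => Nat.find_min hP hm⟩
    have hlt : x + 2*a*n < t := by
      rcases n with _ | m
      · simpa using ht'
      · have := not_le.mp (hmin m (Nat.lt_succ_self m))
        push_cast at this ⊢
        linarith
    exact Set.mem_iUnion.mpr ⟨n, hlt, hle⟩
  have hec : Real.exp (-c) < 1 := Real.exp_lt_one_iff.mpr (by linarith)
  have hpos1 : 0 < 1 - Real.exp (-c) := by linarith
  have key : ∀ x : ℝ,
      (∫⁻ t in Set.Ioi x, ENNReal.ofReal (Real.exp (-∫ ξ in x..t, q ξ))) ≤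
        ENNReal.ofReal (2 * a + 2 * a * (1 - Real.exp (-c))⁻¹) := by
    intro x
    calc (∫⁻ t in Set.Ioi x, ENNReal.ofReal (Real.exp (-∫ ξ in x..t, q ξ)))
        ≤ ∫⁻ t in ⋃ k : ℕ, Set.Ioc (x + 2*a*k) (x + 2*a*(k+1 : ℕ)),
            ENNReal.ofReal (Real.exp (-∫ ξ in x..t, q ξ)) :=
          lintegral_mono_set (hcover x)
      _ ≤ ∑' k : ℕ, ∫⁻ t in Set.Ioc (x + 2*a*k) (x + 2*a*(k+1 : ℕ)),
            ENNReal.ofReal (Real.exp (-∫ ξ in x..t, q ξ)) :=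
          lintegral_iUnion_le _ _
      _ ≤ ∑' k : ℕ, ENNReal.ofReal (2*a) * ENNReal.ofReal (Real.exp (-c)) ^ k := by
          refine ENNReal.tsum_le_tsum fun k => ?_
          calc (∫⁻ t in Set.Ioc (x + 2*a*k) (x + 2*a*(k+1 : ℕ)),
                ENNReal.ofReal (Real.exp (-∫ ξ in x..t, q ξ)))
              ≤ ∫⁻ _ in Set.Ioc (x + 2*a*k) (x + 2*a*(k+1 : ℕ)),
                  ENNReal.ofReal (Real.exp (-c) ^ k) := by
                refine setLIntegral_mono measurable_const fun t ht => ?_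
                exact ENNReal.ofReal_le_ofReal (hexp x k t ht)
            _ = ENNReal.ofReal (Real.exp (-c) ^ k) *
                  volume (Set.Ioc (x + 2*a*k) (x + 2*a*(k+1 : ℕ))) := setLIntegral_const _ _
            _ = ENNReal.ofReal (2*a) * ENNReal.ofReal (Real.exp (-c)) ^ k := by
                rw [Real.volume_Ioc, ENNReal.ofReal_pow (Real.exp_nonneg _)]
                rw [mul_comm]
                congr 1
                congr 1
                push_cast
                ring
      _ = ENNReal.ofReal (2*a) * (1 - ENNReal.ofReal (Real.exp (-c)))⁻¹ := by
          rw [ENNReal.tsum_mul_left, ENNReal.tsum_geometric]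
      _ ≤ ENNReal.ofReal (2 * a + 2 * a * (1 - Real.exp (-c))⁻¹) := by
          have h1 : (1 : ℝ≥0∞) - ENNReal.ofReal (Real.exp (-c)) =
              ENNReal.ofReal (1 - Real.exp (-c)) := by
            rw [ENNReal.ofReal_sub _ (Real.exp_nonneg _), ENNReal.ofReal_one]
          rw [h1, ← ENNReal.ofReal_inv_of_pos hpos1, ← ENNReal.ofReal_mul (by linarith)]
          refine ENNReal.ofReal_le_ofReal ?_
          nlinarith
  refine ⟨key, ?_⟩
  refine lt_of_le_of_lt (iSup_le key) ENNReal.ofReal_lt_top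
end
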